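/- For every natural number l, pointwise in p, q > 0 one has k_j^B(p,q) ≤ (1/π) Q_{j-1/2}((p/q + q/p)/2) where k_j^B(p,q) = (1/(2π))[Q_{j-1/2}((p/q+q/p)/2) + Q_{j+1/2}((p/q+q/p)/2)], and consequently the critical constants satisfy κ_j^B ≥ κ_{j-1/2}^C, where 1/κ_j^B = ∫_0^∞ k_j^B((t+1/t)/2) dt/t and 1/κ_l^C = (1/π)∫_0^∞ Q_l((t+1/t)/2) dt/t. -/

import Mathlib

open MeasureTheory

/-! Both Neumann's integral `Q_l(z) = ½ ∫₋₁¹ P_l(t) / (z - t) dt` and the Rodrigues-type integral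
`2^{-(l+1)} ∫₋₁¹ (1 - t²)^l / (z - t)^{l+1} dt` satisfy Bonnet's three-term recurrence (the first
because `∫₋₁¹ P_{l+1} = 0`, the second by an explicit primitive) and agree for `l = 0, 1`, so they
agree for `z > 1`. In the second form `Q_l(z) > 0`, and `(1 - t²) / (z - t) ≤ 2` on `[-1, 1]` gives
`Q_{l+1}(z) ≤ Q_l(z)`; this is `k^B ≤ k^C` pointwise. Since `k^B > 0` off the diagonal, integrating
against `dt / t` makes `0 < ∫ k^B ≤ ∫ k^C`, and inverting reverses the inequality. -/

/-- The Legendre polynomials, via Bonnet's recursion. -/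
noncomputable def legendreP : ℕ → ℝ → ℝ
  | 0, _ => 1
  | 1, t => t
  | (n + 2), t =>
      ((2 * (n : ℝ) + 3) * t * legendreP (n + 1) t - ((n : ℝ) + 1) * legendreP n t) /
        ((n : ℝ) + 2)

lemma legendreP_add_two (n : ℕ) (t : ℝ) :
    legendreP (n + 2) t =
      ((2 * (n : ℝ) + 3) * t * legendreP (n + 1) t - ((n : ℝ) + 1) * legendreP n t) /
        ((n : ℝ) + 2) := rfl

lemma continuous_legendreP : ∀ n, Continuous (legendreP n)
  | 0 => continuous_const
  | 1 => continuous_id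
  | (n + 2) => by
      have := continuous_legendreP (n + 1)
      have := continuous_legendreP n
      simp only [funext (legendreP_add_two n)]
      fun_prop

lemma legendreP_apply_one : ∀ n, legendreP n 1 = 1
  | 0 | 1 => rfl
  | (n + 2) => by
      rw [legendreP_add_two, legendreP_apply_one (n + 1), legendreP_apply_one n]
      field_simp
      ring

lemma legendreP_apply_neg_one : ∀ n, legendreP n (-1) = (-1) ^ n
  | 0 => rfl
  | 1 => by simp [legendreP]
  | (n + 2) => by
      rw [legendreP_add_two, legendreP_apply_neg_one (n + 1), legendreP_apply_neg_one n]
      field_simp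
      ring

noncomputable def legendrePDeriv : ℕ → ℝ → ℝ
  | 0, _ => 0
  | (n + 1), t => ((n : ℝ) + 1) * legendreP n t + t * legendrePDeriv n t

lemma sq_sub_one_mul_legendrePDeriv : ∀ (n : ℕ) (t : ℝ),
    (t ^ 2 - 1) * legendrePDeriv n t = ((n : ℝ) + 1) * (legendreP (n + 1) t - t * legendreP n t)
  | 0, t => by simp [legendrePDeriv, legendreP]
  | (n + 1), t => by
      have ih := sq_sub_one_mul_legendrePDeriv n t
      rw [legendrePDeriv, legendreP_add_two]
      push_cast
      field_simp
      linear_combination ((n : ℝ) + 2) * t * ih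

lemma mul_legendrePDeriv_succ_sub (n : ℕ) (t : ℝ) :
    t * legendrePDeriv (n + 1) t - legendrePDeriv n t = ((n : ℝ) + 1) * legendreP (n + 1) t := by
  rw [legendrePDeriv]
  linear_combination sq_sub_one_mul_legendrePDeriv n t

lemma legendrePDeriv_add_two_sub (n : ℕ) (t : ℝ) :
    legendrePDeriv (n + 2) t - legendrePDeriv n t = (2 * (n : ℝ) + 3) * legendreP (n + 1) t := by
  rw [legendrePDeriv]
  push_cast
  linear_combination mul_legendrePDeriv_succ_sub n t

lemma hasDerivAt_legendreP : ∀ (n : ℕ) (t : ℝ), HasDerivAt (legendreP n) (legendrePDeriv n t) t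
  | 0, t => hasDerivAt_const t (1 : ℝ)
  | 1, t => by simpa [legendrePDeriv, legendreP] using hasDerivAt_id' t
  | (n + 2), t => by
      have h := ((((hasDerivAt_id' t).const_mul (2 * (n : ℝ) + 3)).fun_mul
        (hasDerivAt_legendreP (n + 1) t)).fun_sub
        ((hasDerivAt_legendreP n t).const_mul ((n : ℝ) + 1))).div_const ((n : ℝ) + 2)
      rw [← funext (legendreP_add_two n)] at h
      refine h.congr_deriv ?_
      rw [eq_comm, eq_div_iff (by positivity), legendrePDeriv]
      push_cast
      linear_combination (-(n : ℝ) - 1) * mul_legendrePDeriv_succ_sub n t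

lemma integral_legendreP_succ (n : ℕ) : ∫ t in (-1 : ℝ)..1, legendreP (n + 1) t = 0 := by
  have hderiv : ∀ t ∈ Set.uIcc (-1 : ℝ) 1,
      HasDerivAt (fun t => (legendreP (n + 2) t - legendreP n t) / (2 * (n : ℝ) + 3))
        (legendreP (n + 1) t) t := by
    intro t _
    have h := ((hasDerivAt_legendreP (n + 2) t).sub (hasDerivAt_legendreP n t)).div_const
      (2 * (n : ℝ) + 3)
    rw [legendrePDeriv_add_two_sub] at h
    exact h.congr_deriv (by field_simp)
  rw [intervalIntegral.integral_eq_sub_of_hasDerivAt hderiv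
    ((continuous_legendreP _).intervalIntegrable _ _)]
  simp only [legendreP_apply_one, legendreP_apply_neg_one, pow_succ]
  ring

/-- The Legendre function of the second kind, via Neumann's integral. -/
noncomputable def legendreQ (l : ℕ) (z : ℝ) : ℝ :=
  (1 / 2) * ∫ t in (-1 : ℝ)..1, legendreP l t / (z - t)

lemma sub_ne_zero_of_one_lt {z t : ℝ} (hz : 1 < z) (ht : t ∈ Set.uIcc (-1 : ℝ) 1) : z - t ≠ 0 := by
  rw [Set.uIcc_of_le (by norm_num)] at ht
  linarith [ht.2]

lemma intervalIntegrable_mul_inv_sub_pow {f : ℝ → ℝ} (hf : Continuous f) {z : ℝ} (hz : 1 < z)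
    (k : ℕ) : IntervalIntegrable (fun t => f t * (z - t)⁻¹ ^ k) volume (-1) 1 :=
  (hf.continuousOn.mul (((continuousOn_const.sub continuousOn_id).inv₀
    fun _ ht => sub_ne_zero_of_one_lt hz ht).fun_pow k)).intervalIntegrable

lemma intervalIntegrable_legendreP_div_sub (l : ℕ) {z : ℝ} (hz : 1 < z) :
    IntervalIntegrable (fun t => legendreP l t / (z - t)) volume (-1) 1 := by
  simpa [div_eq_mul_inv] using intervalIntegrable_mul_inv_sub_pow (continuous_legendreP l) hz 1

lemma legendreQ_add_two (n : ℕ) {z : ℝ} (hz : 1 < z) :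
    ((n : ℝ) + 2) * legendreQ (n + 2) z =
      (2 * (n : ℝ) + 3) * z * legendreQ (n + 1) z - ((n : ℝ) + 1) * legendreQ n z := by
  have h1 := intervalIntegrable_legendreP_div_sub (n + 1) hz
  have h0 := intervalIntegrable_legendreP_div_sub n hz
  have hP : IntervalIntegrable (legendreP (n + 1)) volume (-1) 1 :=
    (continuous_legendreP _).intervalIntegrable _ _
  have bonnet : ∀ t ∈ Set.uIcc (-1 : ℝ) 1,
      ((n : ℝ) + 2) * (legendreP (n + 2) t / (z - t)) =
        (2 * (n : ℝ) + 3) * z * (legendreP (n + 1) t / (z - t))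
          - (2 * (n : ℝ) + 3) * legendreP (n + 1) t
          - ((n : ℝ) + 1) * (legendreP n t / (z - t)) := by
    intro t ht
    have := sub_ne_zero_of_one_lt hz ht
    rw [legendreP_add_two]
    field_simp
    ring
  calc ((n : ℝ) + 2) * legendreQ (n + 2) z
      = (1 / 2) * ∫ t in (-1 : ℝ)..1, ((n : ℝ) + 2) * (legendreP (n + 2) t / (z - t)) := by
        rw [legendreQ, intervalIntegral.integral_const_mul]; ring
    _ = (1 / 2) * ((2 * (n : ℝ) + 3) * z * ∫ t in (-1 : ℝ)..1, legendreP (n + 1) t / (z - t))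
          - (1 / 2) * ((2 * (n : ℝ) + 3) * ∫ t in (-1 : ℝ)..1, legendreP (n + 1) t)
          - (1 / 2) * (((n : ℝ) + 1) * ∫ t in (-1 : ℝ)..1, legendreP n t / (z - t)) := by
        rw [intervalIntegral.integral_congr bonnet,
          intervalIntegral.integral_sub ((h1.const_mul _).sub (hP.const_mul _)) (h0.const_mul _),
          intervalIntegral.integral_sub (h1.const_mul _) (hP.const_mul _),
          intervalIntegral.integral_const_mul, intervalIntegral.integral_const_mul,
          intervalIntegral.integral_const_mul]
        ring
    _ = _ := by rw [integral_legendreP_succ, legendreQ, legendreQ]; ring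

-- Neumann's integral after `l` integrations by parts against Rodrigues' formula.
noncomputable def rodriguesIntegral (l : ℕ) (z : ℝ) : ℝ :=
  ∫ t in (-1 : ℝ)..1, (1 - t ^ 2) ^ l * (z - t)⁻¹ ^ (l + 1)

lemma hasDerivAt_inv_const_sub {z t : ℝ} (hzt : z - t ≠ 0) :
    HasDerivAt (fun t => (z - t)⁻¹) ((z - t)⁻¹ ^ 2) t := by
  simpa using ((hasDerivAt_id' t).const_sub z).fun_inv hzt

lemma hasDerivAt_one_sub_sq (t : ℝ) : HasDerivAt (fun t : ℝ => 1 - t ^ 2) (-(2 * t)) t := by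
  simpa using (hasDerivAt_pow 2 t).const_sub 1

-- The primitive was found by the ansatz `(1 - t²) ^ (l + 1) * (a w ^ (l + 2) + b w ^ (l + 1))`,
-- `w = (z - t)⁻¹`, with `a`, `b` affine in `t`.
lemma hasDerivAt_rodriguesIntegral_primitive (l : ℕ) {z t : ℝ} (hzt : z - t ≠ 0) :
    HasDerivAt (fun t => (1 - t ^ 2) ^ (l + 1) *
        ((2 * z * t + 1 - 3 * z ^ 2) * (z - t)⁻¹ ^ (l + 2) + (3 * z - t) * (z - t)⁻¹ ^ (l + 1)))
      (((l : ℝ) + 2) * ((1 - t ^ 2) ^ (l + 2) * (z - t)⁻¹ ^ (l + 2 + 1))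
        - 2 * (2 * (l : ℝ) + 3) * z * ((1 - t ^ 2) ^ (l + 1) * (z - t)⁻¹ ^ (l + 1 + 1))
        + 4 * ((l : ℝ) + 1) * ((1 - t ^ 2) ^ l * (z - t)⁻¹ ^ (l + 1))) t := by
  have hw := hasDerivAt_inv_const_sub hzt
  have ha : HasDerivAt (fun t => 2 * z * t + 1 - 3 * z ^ 2) (2 * z) t := by
    simpa using (((hasDerivAt_id' t).const_mul (2 * z)).add_const 1).sub_const (3 * z ^ 2)
  have hb : HasDerivAt (fun t => 3 * z - t) (-1) t := (hasDerivAt_id' t).const_sub _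
  have h := ((hasDerivAt_one_sub_sq t).fun_pow (l + 1)).fun_mul
    ((ha.fun_mul (hw.fun_pow (l + 2))).fun_add (hb.fun_mul (hw.fun_pow (l + 1))))
  refine h.congr_deriv ?_
  push_cast
  simp only [inv_pow]
  field_simp
  ring

lemma intervalIntegrable_rodriguesIntegrand (l k : ℕ) {z : ℝ} (hz : 1 < z) :
    IntervalIntegrable (fun t : ℝ => (1 - t ^ 2) ^ l * (z - t)⁻¹ ^ k) volume (-1) 1 :=
  intervalIntegrable_mul_inv_sub_pow (by fun_prop) hz k

lemma rodriguesIntegral_add_two (l : ℕ) {z : ℝ} (hz : 1 < z) :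
    ((l : ℝ) + 2) * rodriguesIntegral (l + 2) z =
      2 * (2 * (l : ℝ) + 3) * z * rodriguesIntegral (l + 1) z
        - 4 * ((l : ℝ) + 1) * rodriguesIntegral l z := by
  have h2 := intervalIntegrable_rodriguesIntegrand (l + 2) (l + 2 + 1) hz
  have h1 := intervalIntegrable_rodriguesIntegrand (l + 1) (l + 1 + 1) hz
  have h0 := intervalIntegrable_rodriguesIntegrand l (l + 1) hz
  have hFTC := intervalIntegral.integral_eq_sub_of_hasDerivAt
    (fun t ht => hasDerivAt_rodriguesIntegral_primitive l (sub_ne_zero_of_one_lt hz ht))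
    (((h2.const_mul _).sub (h1.const_mul _)).add (h0.const_mul _))
  rw [intervalIntegral.integral_add ((h2.const_mul _).sub (h1.const_mul _)) (h0.const_mul _),
    intervalIntegral.integral_sub (h2.const_mul _) (h1.const_mul _),
    intervalIntegral.integral_const_mul, intervalIntegral.integral_const_mul,
    intervalIntegral.integral_const_mul] at hFTC
  simp only [one_pow, neg_one_sq, sub_self, zero_pow (Nat.succ_ne_zero _), zero_mul] at hFTC
  rw [rodriguesIntegral, rodriguesIntegral, rodriguesIntegral]
  linarith

lemma legendreQ_one_eq_rodriguesIntegral {z : ℝ} (hz : 1 < z) :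
    legendreQ 1 z = (1 / 2) ^ 2 * rodriguesIntegral 1 z := by
  have hderiv : ∀ t ∈ Set.uIcc (-1 : ℝ) 1, HasDerivAt (fun t => (1 - t ^ 2) * (z - t)⁻¹)
      ((1 - t ^ 2) ^ 1 * (z - t)⁻¹ ^ (1 + 1) - 2 * (t * (z - t)⁻¹)) t := by
    intro t ht
    refine ((hasDerivAt_one_sub_sq t).fun_mul
      (hasDerivAt_inv_const_sub (sub_ne_zero_of_one_lt hz ht))).congr_deriv ?_
    ring
  have h1 := intervalIntegrable_rodriguesIntegrand 1 (1 + 1) hz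
  have h0 : IntervalIntegrable (fun t : ℝ => t * (z - t)⁻¹) volume (-1) 1 := by
    simpa using intervalIntegrable_mul_inv_sub_pow continuous_id hz 1
  have hFTC := intervalIntegral.integral_eq_sub_of_hasDerivAt hderiv (h1.sub (h0.const_mul 2))
  rw [intervalIntegral.integral_sub h1 (h0.const_mul 2),
    intervalIntegral.integral_const_mul] at hFTC
  simp only [one_pow, neg_one_sq, sub_self, zero_mul] at hFTC
  simp only [legendreQ, rodriguesIntegral, legendreP, div_eq_mul_inv]
  linarith

lemma legendreQ_eq_rodriguesIntegral : ∀ (l : ℕ) {z : ℝ}, 1 < z →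
    legendreQ l z = (1 / 2) ^ (l + 1) * rodriguesIntegral l z
  | 0, _, _ => by simp [legendreQ, rodriguesIntegral, legendreP, div_eq_mul_inv]
  | 1, _, hz => legendreQ_one_eq_rodriguesIntegral hz
  | (l + 2), z, hz => by
      have hQ := legendreQ_add_two l hz
      have hI := rodriguesIntegral_add_two l hz
      rw [legendreQ_eq_rodriguesIntegral (l + 1) hz, legendreQ_eq_rodriguesIntegral l hz] at hQ
      refine mul_left_cancel₀ (by positivity : ((l : ℝ) + 2) ≠ 0) ?_
      rw [hQ]
      linear_combination -(1 / 2 : ℝ) ^ (l + 3) * hI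

lemma rodriguesIntegral_pos (l : ℕ) {z : ℝ} (hz : 1 < z) : 0 < rodriguesIntegral l z :=
  intervalIntegral.intervalIntegral_pos_of_pos_on (intervalIntegrable_rodriguesIntegrand l _ hz)
    (fun t ht => by
      have : 0 < 1 - t ^ 2 := by nlinarith [ht.1, ht.2]
      have : 0 < z - t := by linarith [ht.2]
      positivity)
    (by norm_num)

lemma rodriguesIntegral_succ_le (l : ℕ) {z : ℝ} (hz : 1 < z) :
    rodriguesIntegral (l + 1) z ≤ 2 * rodriguesIntegral l z := by
  rw [rodriguesIntegral, rodriguesIntegral, ← intervalIntegral.integral_const_mul]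
  refine intervalIntegral.integral_mono_on (by norm_num)
    (intervalIntegrable_rodriguesIntegrand _ _ hz)
    ((intervalIntegrable_rodriguesIntegrand _ _ hz).const_mul 2) fun t ht => ?_
  have hzt : 0 < z - t := by linarith [ht.2]
  -- `1 - t ^ 2 = (1 - t) (1 + t) ≤ (z - t) * 2`
  have hratio : (1 - t ^ 2) * (z - t)⁻¹ ≤ 2 := by
    rw [← div_eq_mul_inv, div_le_iff₀ hzt]
    nlinarith [ht.1, ht.2]
  have : 0 ≤ 1 - t ^ 2 := by nlinarith [ht.1, ht.2]
  calc (1 - t ^ 2) ^ (l + 1) * (z - t)⁻¹ ^ (l + 1 + 1)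
      = ((1 - t ^ 2) * (z - t)⁻¹) * ((1 - t ^ 2) ^ l * (z - t)⁻¹ ^ (l + 1)) := by ring
    _ ≤ 2 * ((1 - t ^ 2) ^ l * (z - t)⁻¹ ^ (l + 1)) := by gcongr

lemma legendreQ_pos (l : ℕ) {z : ℝ} (hz : 1 < z) : 0 < legendreQ l z := by
  rw [legendreQ_eq_rodriguesIntegral l hz]
  exact mul_pos (by positivity) (rodriguesIntegral_pos l hz)

lemma legendreQ_succ_le_of_one_lt (l : ℕ) {z : ℝ} (hz : 1 < z) :
    legendreQ (l + 1) z ≤ legendreQ l z := by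
  rw [legendreQ_eq_rodriguesIntegral (l + 1) hz, legendreQ_eq_rodriguesIntegral l hz]
  calc (1 / 2 : ℝ) ^ (l + 1 + 1) * rodriguesIntegral (l + 1) z
      ≤ (1 / 2 : ℝ) ^ (l + 1 + 1) * (2 * rodriguesIntegral l z) := by
        gcongr
        exact rodriguesIntegral_succ_le l hz
    _ = (1 / 2 : ℝ) ^ (l + 1) * rodriguesIntegral l z := by ring

/-- Neumann's integral diverges logarithmically at `z = 1`, so Lean's integral takes the junk
value `0` there. -/
lemma legendreQ_one (l : ℕ) : legendreQ l 1 = 0 := by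
  have hnear : {t : ℝ | 1 / 2 < legendreP l t} ∈ nhds (1 : ℝ) :=
    (isOpen_Ioi.preimage (continuous_legendreP l)).mem_nhds (by norm_num [legendreP_apply_one])
  have hdiv : ¬ IntervalIntegrable (fun t => legendreP l t / (1 - t)) volume (-1) 1 := by
    refine not_intervalIntegrable_of_sub_inv_isBigO_punctured (c := 1) ?_ (by norm_num)
      (by norm_num [Set.uIcc_of_le])
    refine Asymptotics.IsBigO.of_bound 2 ?_
    filter_upwards [mem_nhdsWithin_of_mem_nhds hnear] with t ht
    rw [norm_inv, norm_div, Real.norm_eq_abs, Real.norm_eq_abs, Real.norm_eq_abs,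
      abs_sub_comm 1 t, div_eq_mul_inv]
    have : 1 ≤ 2 * |legendreP l t| := by linarith [le_abs_self (legendreP l t), ht.le]
    nlinarith [inv_nonneg.2 (abs_nonneg (t - 1))]
  rw [legendreQ, intervalIntegral.integral_undef hdiv, mul_zero]

lemma legendreQ_nonneg (l : ℕ) {z : ℝ} (hz : 1 ≤ z) : 0 ≤ legendreQ l z := by
  rcases hz.eq_or_lt with rfl | hz
  · rw [legendreQ_one]
  · exact (legendreQ_pos l hz).le

lemma legendreQ_succ_le (l : ℕ) {z : ℝ} (hz : 1 ≤ z) : legendreQ (l + 1) z ≤ legendreQ l z := by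
  rcases hz.eq_or_lt with rfl | hz
  · rw [legendreQ_one, legendreQ_one]
  · exact legendreQ_succ_le_of_one_lt l hz

lemma measurable_legendreQ (l : ℕ) : Measurable (legendreQ l) := by
  have hP := (continuous_legendreP l).measurable
  have hint : StronglyMeasurable fun z : ℝ =>
      ∫ t in Set.Ioc (-1 : ℝ) 1, legendreP l t / (z - t) :=
    StronglyMeasurable.integral_prod_right (f := fun z t => legendreP l t / (z - t))
      (by fun_prop : Measurable fun x : ℝ × ℝ => legendreP l x.2 / (x.1 - x.2)).stronglyMeasurable
  unfold legendreQ
  simp only [intervalIntegral.integral_of_le (by norm_num : (-1 : ℝ) ≤ 1)]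
  exact hint.measurable.const_mul _

/-- The Brown-Ravenhall kernel in the channel `j = m + 1/2`. -/
noncomputable def kernelB (m : ℕ) (p q : ℝ) : ℝ :=
  (1 / (2 * Real.pi)) *
    (legendreQ m ((p / q + q / p) / 2) + legendreQ (m + 1) ((p / q + q / p) / 2))

/-- The Chandrasekhar kernel in the channel `l`. -/
noncomputable def kernelC (l : ℕ) (p q : ℝ) : ℝ :=
  (1 / Real.pi) * legendreQ l ((p / q + q / p) / 2)

lemma half_div_add_div_sub_one {p q : ℝ} (hp : 0 < p) (hq : 0 < q) :
    (p / q + q / p) / 2 - 1 = (p - q) ^ 2 / (2 * p * q) := by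
  field_simp
  ring

lemma one_le_half_div_add_div {p q : ℝ} (hp : 0 < p) (hq : 0 < q) : 1 ≤ (p / q + q / p) / 2 := by
  have := half_div_add_div_sub_one hp hq
  have : 0 ≤ (p - q) ^ 2 / (2 * p * q) := by positivity
  linarith

lemma one_lt_half_div_add_div {p q : ℝ} (hp : 0 < p) (hq : 0 < q) (hpq : p ≠ q) :
    1 < (p / q + q / p) / 2 := by
  have := half_div_add_div_sub_one hp hq
  have : 0 < (p - q) ^ 2 / (2 * p * q) := by
    have := sub_ne_zero.2 hpq
    positivity
  linarith

lemma kernelB_le_kernelC_of_pos (m : ℕ) {p q : ℝ} (hp : 0 < p) (hq : 0 < q) :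
    kernelB m p q ≤ kernelC m p q := by
  have hQ := legendreQ_succ_le m (one_le_half_div_add_div hp hq)
  rw [kernelB, kernelC]
  generalize (p / q + q / p) / 2 = z at hQ ⊢
  have := Real.pi_pos
  field_simp
  linarith

lemma kernelB_nonneg (m : ℕ) {p q : ℝ} (hp : 0 < p) (hq : 0 < q) : 0 ≤ kernelB m p q := by
  have hz := one_le_half_div_add_div hp hq
  have := legendreQ_nonneg m hz
  have := legendreQ_nonneg (m + 1) hz
  rw [kernelB]
  positivity

lemma kernelB_pos (m : ℕ) {p q : ℝ} (hp : 0 < p) (hq : 0 < q) (hpq : p ≠ q) :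
    0 < kernelB m p q := by
  have hz := one_lt_half_div_add_div hp hq hpq
  have := legendreQ_pos m hz
  have := legendreQ_nonneg (m + 1) hz.le
  rw [kernelB]
  positivity

lemma measurable_kernelB (m : ℕ) (q : ℝ) : Measurable fun p => kernelB m p q := by
  have := measurable_legendreQ m
  have := measurable_legendreQ (m + 1)
  unfold kernelB
  fun_prop

-- If `g` is not integrable on `s`, its integral is Lean's junk value `0`, and so is the left side.
lemma inv_setIntegral_le_inv_setIntegral {α : Type*} [MeasurableSpace α] {μ : Measure α}
    {s : Set α} {f g : α → ℝ} (hs : MeasurableSet s) (hf : AEStronglyMeasurable f (μ.restrict s))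
    (hf0 : ∀ x ∈ s, 0 ≤ f x) (hfg : ∀ x ∈ s, f x ≤ g x) (hsupp : 0 < μ (Function.support f ∩ s)) :
    (∫ x in s, g x ∂μ)⁻¹ ≤ (∫ x in s, f x ∂μ)⁻¹ := by
  by_cases hg : IntegrableOn g s μ
  · have hfi : IntegrableOn f s μ := hg.mono' hf <| (ae_restrict_iff' hs).2 <|
      ae_of_all _ fun x hx => by rw [Real.norm_eq_abs, abs_of_nonneg (hf0 x hx)]; exact hfg x hx
    have hpos : 0 < ∫ x in s, f x ∂μ :=
      (setIntegral_pos_iff_support_of_nonneg_ae ((ae_restrict_iff' hs).2 (ae_of_all _ hf0)) hfi).2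
        hsupp
    exact inv_anti₀ hpos (setIntegral_mono_on hfi hg hs hfg)
  · rw [integral_undef hg, inv_zero, inv_nonneg]
    exact setIntegral_nonneg hs hf0

/-- Pointwise, `k_j^B ≤ k_{j-1/2}^C` (with `j = m + 1/2`, `l = m`), and consequently
the critical coupling constants satisfy `κ_j^B ≥ κ_{j-1/2}^C`. -/
theorem kernelB_le_kernelC (m : ℕ) :
    (∀ p q : ℝ, 0 < p → 0 < q → kernelB m p q ≤ kernelC m p q) ∧
    (∫ t in Set.Ioi (0 : ℝ), kernelC m t 1 / t)⁻¹
      ≤ (∫ t in Set.Ioi (0 : ℝ), kernelB m t 1 / t)⁻¹ := by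
  have hle : ∀ p q : ℝ, 0 < p → 0 < q → kernelB m p q ≤ kernelC m p q :=
    fun _ _ hp hq => kernelB_le_kernelC_of_pos m hp hq
  refine ⟨hle, ?_⟩
  have hsupp : Set.Ioi (1 : ℝ) ⊆ Function.support (fun t => kernelB m t 1 / t) ∩ Set.Ioi 0 :=
    fun t (ht : 1 < t) => ⟨(div_pos (kernelB_pos m (by linarith) one_pos ht.ne') (by linarith)).ne',
      (zero_lt_one.trans ht : 0 < t)⟩
  refine inv_setIntegral_le_inv_setIntegral measurableSet_Ioi
    ((measurable_kernelB m 1).div measurable_id).aestronglyMeasurable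
    (fun t (ht : 0 < t) => div_nonneg (kernelB_nonneg m ht one_pos) ht.le)
    (fun t (ht : 0 < t) => div_le_div_of_nonneg_right (hle t 1 ht one_pos) ht.le)
    ?_
  calc (0 : ENNReal) < volume (Set.Ioi (1 : ℝ)) := by simp
    _ ≤ _ := measure_mono hsupp
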